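/- Let G be a group, X ⊆ G, m ≥ 1, and a, b : Fin m → G two lists of elements. Suppose l is a list of elements of X whose product x = l.prod satisfies x⁻¹ · aᵢ · x = bᵢ for all i, and l has minimal length among all lists of elements of X whose product conjugates the list a to the list b. If T is a finite subset of G such that for every i ∈ Fin m and every j ∈ {0, ..., l.length} the element x_j⁻¹ · aᵢ · x_j lies in T, where x_j is the product of the first j entries of l, then l.length + 1 ≤ |T|^m; in particular l.length ≤ |T|^m − 1. -/

import Mathlib

/-!
If two prefixes `l.take j₁` and `l.take j₂` (with `j₁ < j₂`) of a conjugating word `l`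
conjugate the tuple `a` to the same tuple, then cutting out the segment between them gives a
strictly shorter word over the same alphabet that still conjugates `a` to `b`. Hence, for a
shortest conjugating word, the `l.length + 1` prefix-conjugates of `a` are pairwise distinct
tuples in `T^m`, and pigeonhole gives `l.length + 1 ≤ |T|^m`.
-/

namespace List

variable {G : Type*} [Group G]

theorem conj_prod_append (u v : List G) (g : G) :
    (u ++ v).prod⁻¹ * g * (u ++ v).prod = v.prod⁻¹ * (u.prod⁻¹ * g * u.prod) * v.prod := by
  rw [prod_append]
  group

theorem conj_prod_take_append_drop {l : List G} {j₁ j₂ : ℕ} {g : G}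
    (h : (l.take j₁).prod⁻¹ * g * (l.take j₁).prod = (l.take j₂).prod⁻¹ * g * (l.take j₂).prod) :
    (l.take j₁ ++ l.drop j₂).prod⁻¹ * g * (l.take j₁ ++ l.drop j₂).prod =
      l.prod⁻¹ * g * l.prod := by
  conv_rhs => rw [← take_append_drop j₂ l]
  rw [conj_prod_append, conj_prod_append, h]

end List

section MinimalConjugator

variable {G ι : Type*} [Group G] {X : Set G} {a b : ι → G} {l : List G}

def prefixConj (a : ι → G) (l : List G) (j : ℕ) : ι → G :=
  fun i => (l.take j).prod⁻¹ * a i * (l.take j).prod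

theorem prefixConj_injOn_of_minimal (hlX : ∀ g ∈ l, g ∈ X)
    (hconj : ∀ i, l.prod⁻¹ * a i * l.prod = b i)
    (hmin : ∀ l' : List G, (∀ g ∈ l', g ∈ X) →
      (∀ i, l'.prod⁻¹ * a i * l'.prod = b i) → l.length ≤ l'.length) :
    Set.InjOn (prefixConj a l) (Set.Iic l.length) := by
  suffices ∀ j₁ j₂, j₁ < j₂ → j₂ ≤ l.length → prefixConj a l j₁ ≠ prefixConj a l j₂ by
    intro j₁ hj₁ j₂ hj₂ heq
    by_contra hne
    rcases Nat.lt_or_gt_of_ne hne with hlt | hlt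
    · exact this j₁ j₂ hlt hj₂ heq
    · exact this j₂ j₁ hlt hj₁ heq.symm
  intro j₁ j₂ hlt hle heq
  have hshorter_mem : ∀ g ∈ l.take j₁ ++ l.drop j₂, g ∈ X := by
    intro g hg
    rcases List.mem_append.1 hg with hg | hg
    · exact hlX g (List.mem_of_mem_take hg)
    · exact hlX g (List.mem_of_mem_drop hg)
  have hshorter_conj : ∀ i, (l.take j₁ ++ l.drop j₂).prod⁻¹ * a i *
      (l.take j₁ ++ l.drop j₂).prod = b i := fun i =>
    (List.conj_prod_take_append_drop (congrFun heq i)).trans (hconj i)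
  have hlen := hmin _ hshorter_mem hshorter_conj
  simp only [List.length_append, List.length_take, List.length_drop] at hlen
  omega

end MinimalConjugator

theorem stmt_1_general {G : Type*} [Group G] (X : Set G) (m : ℕ)
    (a b : Fin m → G) (l : List G) (hlX : ∀ g ∈ l, g ∈ X)
    (hconj : ∀ i : Fin m, l.prod⁻¹ * a i * l.prod = b i)
    (hmin : ∀ l' : List G, (∀ g ∈ l', g ∈ X) →
      (∀ i : Fin m, l'.prod⁻¹ * a i * l'.prod = b i) → l.length ≤ l'.length)
    (T : Finset G)
    (hT : ∀ (i : Fin m) (j : ℕ), j ≤ l.length →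
      ((l.take j).prod)⁻¹ * a i * (l.take j).prod ∈ T) :
    l.length + 1 ≤ T.card ^ m ∧ l.length ≤ T.card ^ m - 1 := by
  have hmaps : ∀ j ∈ Finset.range (l.length + 1),
      prefixConj a l j ∈ Fintype.piFinset fun _ : Fin m => T := fun j hj =>
    Fintype.mem_piFinset.2 fun i => hT i j (Nat.lt_succ_iff.1 (Finset.mem_range.1 hj))
  have hinj : Set.InjOn (prefixConj a l) (Finset.range (l.length + 1)) := by
    simpa only [Finset.coe_range, Set.Iio_add_one_eq_Iic] using prefixConj_injOn_of_minimal hlX hconj hmin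
  have hcard := Finset.card_le_card_of_injOn _ hmaps hinj
  simp only [Finset.card_range, Fintype.card_piFinset, Finset.prod_const, Finset.card_univ,
    Fintype.card_fin] at hcard
  exact ⟨hcard, by omega⟩

/-- Quantitative pigeonhole bound on the length of a
minimal-length conjugating word. -/
theorem stmt_1 {G : Type*} [Group G] (X : Set G) (m : ℕ) (hm : 1 ≤ m)
    (a b : Fin m → G) (l : List G) (hlX : ∀ g ∈ l, g ∈ X)
    (hconj : ∀ i : Fin m, l.prod⁻¹ * a i * l.prod = b i)
    (hmin : ∀ l' : List G, (∀ g ∈ l', g ∈ X) →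
      (∀ i : Fin m, l'.prod⁻¹ * a i * l'.prod = b i) → l.length ≤ l'.length)
    (T : Finset G)
    (hT : ∀ (i : Fin m) (j : ℕ), j ≤ l.length →
      ((l.take j).prod)⁻¹ * a i * (l.take j).prod ∈ T) :
    l.length + 1 ≤ T.card ^ m ∧ l.length ≤ T.card ^ m - 1 :=
  stmt_1_general X m a b l hlX hconj hmin T hT
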